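/- Let (x₁,y₁),…,(x_N,y_N) be training data with xₙ ∈ ℝ^p and yₙ ∈ {−1,+1}, let C ≥ 0, d ∈ [0, 1/2] and μ > 0, and let R be the regularized double-ramp risk. If (w*, b*, ρ*) is a global minimizer of R over ℝ^p × ℝ × ℝ, then (w*, b*, |ρ*|) is also a global minimizer of R; in particular, the minimum of R is attained at a point whose bandwidth parameter is non-negative. -/

import Mathlib

/-- The double ramp loss on margin `t` with rejection cost `d`, slope `μ`, bandwidth `ρ`. -/
noncomputable def LDR (d μ ρ t : ℝ) : ℝ :=
  d / μ * (max 0 (μ - t + ρ) - max 0 (-μ^2 - t + ρ))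
    + (1 - d) / μ * (max 0 (μ - t - ρ) - max 0 (-μ^2 - t - ρ))

/-- The regularized double-ramp risk for training data `x, y`. -/
noncomputable def regRisk {N p : ℕ} (x : Fin N → EuclideanSpace ℝ (Fin p))
    (y : Fin N → ℝ) (C d μ : ℝ) (w : EuclideanSpace ℝ (Fin p)) (b ρ : ℝ) : ℝ :=
  (1/2) * ‖w‖^2 + C * ∑ n, LDR d μ ρ (y n * ((inner ℝ w (x n) : ℝ) + b))

/-!
Writing `ramp μ u = max 0 (μ + u) - max 0 (-μ² + u)`, which is nondecreasing in `u`, the loss is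
`(d/μ) ramp (ρ - t) + ((1-d)/μ) ramp (-ρ - t)`. Flipping the sign of `ρ` swaps the two weights, so
`LDR (-ρ) - LDR ρ = ((1 - 2d)/μ) (ramp (ρ - t) - ramp (-ρ - t))`, which is `≤ 0` when `d ≤ 1/2` and
`ρ ≤ 0`. Hence replacing `ρ` by `|ρ|` never increases the risk, and a minimizer stays a minimizer.
-/

noncomputable def ramp (μ u : ℝ) : ℝ :=
  max 0 (μ + u) - max 0 (-μ ^ 2 + u)

lemma ramp_monotone {μ : ℝ} (hμ : 0 ≤ μ) : Monotone (ramp μ) := by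
  intro u v huv
  have hμ' : -μ ^ 2 ≤ μ := by nlinarith
  unfold ramp
  rcases max_cases 0 (μ + u) with ⟨h1, _⟩ | ⟨h1, _⟩ <;>
  rcases max_cases 0 (-μ ^ 2 + u) with ⟨h2, _⟩ | ⟨h2, _⟩ <;>
  rcases max_cases 0 (μ + v) with ⟨h3, _⟩ | ⟨h3, _⟩ <;>
  rcases max_cases 0 (-μ ^ 2 + v) with ⟨h4, _⟩ | ⟨h4, _⟩ <;> linarith

lemma LDR_eq_ramp (d μ ρ t : ℝ) :
    LDR d μ ρ t = d / μ * ramp μ (ρ - t) + (1 - d) / μ * ramp μ (-ρ - t) := by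
  simp only [LDR, ramp]
  ring_nf

lemma LDR_neg_sub_LDR (d μ ρ t : ℝ) :
    LDR d μ (-ρ) t - LDR d μ ρ t = (1 - 2 * d) / μ * (ramp μ (ρ - t) - ramp μ (-ρ - t)) := by
  rw [LDR_eq_ramp, LDR_eq_ramp, neg_neg]
  ring

lemma LDR_neg_le_of_nonpos {d μ ρ : ℝ} (hd : d ≤ 1 / 2) (hμ : 0 ≤ μ) (hρ : ρ ≤ 0) (t : ℝ) :
    LDR d μ (-ρ) t ≤ LDR d μ ρ t := by
  have hramp : ramp μ (ρ - t) ≤ ramp μ (-ρ - t) := ramp_monotone hμ (by linarith)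
  have hweight : 0 ≤ (1 - 2 * d) / μ := div_nonneg (by linarith) hμ
  have hdiff := LDR_neg_sub_LDR d μ ρ t
  linarith [mul_nonpos_of_nonneg_of_nonpos hweight (sub_nonpos.2 hramp)]

lemma LDR_abs_le {d μ : ℝ} (hd : d ≤ 1 / 2) (hμ : 0 ≤ μ) (ρ t : ℝ) :
    LDR d μ |ρ| t ≤ LDR d μ ρ t := by
  rcases le_total 0 ρ with hρ | hρ
  · rw [abs_of_nonneg hρ]
  · rw [abs_of_nonpos hρ]
    exact LDR_neg_le_of_nonpos hd hμ hρ t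

lemma regRisk_abs_le {N p : ℕ} (x : Fin N → EuclideanSpace ℝ (Fin p)) (y : Fin N → ℝ)
    {C d μ : ℝ} (hC : 0 ≤ C) (hd : d ≤ 1 / 2) (hμ : 0 ≤ μ)
    (w : EuclideanSpace ℝ (Fin p)) (b ρ : ℝ) :
    regRisk x y C d μ w b |ρ| ≤ regRisk x y C d μ w b ρ := by
  unfold regRisk
  gcongr with n _
  exact LDR_abs_le hd hμ ρ _

theorem stmt_8_general {N p : ℕ} (x : Fin N → EuclideanSpace ℝ (Fin p)) (y : Fin N → ℝ)
    (C d μ : ℝ) (hC : 0 ≤ C)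
    (hd : d ∈ Set.Icc (0 : ℝ) (1/2)) (hμ : 0 < μ)
    (wstar : EuclideanSpace ℝ (Fin p)) (bstar ρstar : ℝ)
    (hmin : ∀ (w : EuclideanSpace ℝ (Fin p)) (b ρ : ℝ),
      regRisk x y C d μ wstar bstar ρstar ≤ regRisk x y C d μ w b ρ) :
    ∀ (w : EuclideanSpace ℝ (Fin p)) (b ρ : ℝ),
      regRisk x y C d μ wstar bstar |ρstar| ≤ regRisk x y C d μ w b ρ :=
  fun w b ρ => (regRisk_abs_le x y hC hd.2 hμ.le wstar bstar ρstar).trans (hmin w b ρ)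

theorem stmt_8 {N p : ℕ} (x : Fin N → EuclideanSpace ℝ (Fin p)) (y : Fin N → ℝ)
    (hy : ∀ n, y n = -1 ∨ y n = 1) (C d μ : ℝ) (hC : 0 ≤ C)
    (hd : d ∈ Set.Icc (0 : ℝ) (1/2)) (hμ : 0 < μ)
    (wstar : EuclideanSpace ℝ (Fin p)) (bstar ρstar : ℝ)
    (hmin : ∀ (w : EuclideanSpace ℝ (Fin p)) (b ρ : ℝ),
      regRisk x y C d μ wstar bstar ρstar ≤ regRisk x y C d μ w b ρ) :
    ∀ (w : EuclideanSpace ℝ (Fin p)) (b ρ : ℝ),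
      regRisk x y C d μ wstar bstar |ρstar| ≤ regRisk x y C d μ w b ρ :=
  stmt_8_general x y C d μ hC hd hμ wstar bstar ρstar hmin
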